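/- Let B₁ be a real m×N matrix, B₂ a real m×M matrix with full column rank, H a real N×N matrix, α ∈ ℝ and w ∈ ℝᵐ. Set P = B₂(B₂ᵀB₂)⁻¹B₂ᵀ, Q = I − P, A = Q·B₁ and b = Q·w. Then the pair (σ, z) ∈ ℝᴺ×ℝᴹ satisfies the block linear system with first row (B₁ᵀB₁ + αH)σ + B₁ᵀB₂ z = B₁ᵀw and second row B₂ᵀB₁ σ + B₂ᵀB₂ z = B₂ᵀw if and only if σ satisfies the decoupled equation (AᵀA + αH)σ = Aᵀb and z = (B₂ᵀB₂)⁻¹B₂ᵀ(w − B₁σ). -/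

import Mathlib

/-!
Since `B₂` is injective, `B₂ᵀB₂` is invertible, so the second block row can be solved for `z` and
`z` eliminated from the first row, leaving the Schur complement equation
`(B₁ᵀB₁ + αH - B₁ᵀPB₁)σ = B₁ᵀw - B₁ᵀPw`. The projector `P` is symmetric and idempotent, hence so
is `Q = I - P`, which gives `AᵀA = B₁ᵀQB₁ = B₁ᵀB₁ - B₁ᵀPB₁` and `Aᵀb = B₁ᵀQw = B₁ᵀw - B₁ᵀPw`.
-/

open Matrix

namespace Matrix

variable {n k R : Type*} [Fintype n] [Fintype k]

theorem mulVec_add_mulVec_and_iff_schurComplement [DecidableEq k] [CommRing R]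
    {K : Matrix n n R} {E : Matrix n k R} {F : Matrix k n R} {G : Matrix k k R}
    (hG : IsUnit G.det) (f : n → R) (g : k → R) (x : n → R) (y : k → R) :
    (K *ᵥ x + E *ᵥ y = f ∧ F *ᵥ x + G *ᵥ y = g) ↔
      ((K - E * G⁻¹ * F) *ᵥ x = f - (E * G⁻¹) *ᵥ g ∧ y = G⁻¹ *ᵥ (g - F *ᵥ x)) := by
  have hy : F *ᵥ x + G *ᵥ y = g ↔ y = G⁻¹ *ᵥ (g - F *ᵥ x) := by
    rw [← eq_sub_iff_add_eq']
    constructor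
    · intro h
      rw [← h, mulVec_mulVec, nonsing_inv_mul _ hG, one_mulVec]
    · rintro rfl
      rw [mulVec_mulVec, mul_nonsing_inv _ hG, one_mulVec]
  rw [hy]
  refine and_congr_left fun hy => ?_
  have hsubst : K *ᵥ x + E *ᵥ y = (K - E * G⁻¹ * F) *ᵥ x + (E * G⁻¹) *ᵥ g := by
    simp only [hy, mulVec_sub, sub_mulVec, mulVec_mulVec, Matrix.mul_assoc]
    abel
  rw [hsubst, eq_sub_iff_add_eq]

theorem isUnit_det_transpose_mul_self [DecidableEq n] [Field R] [LinearOrder R]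
    [IsStrictOrderedRing R] {B : Matrix k n R} (hB : Function.Injective B.mulVec) :
    IsUnit (Bᵀ * B).det := by
  rw [← isUnit_iff_isUnit_det, ← mulVec_injective_iff_isUnit]
  exact LinearMap.ker_eq_bot.mp
    ((ker_mulVecLin_transpose_mul_self B).trans (LinearMap.ker_eq_bot.mpr hB))

omit [Fintype n] in
theorem transpose_mul_mul_self_of_isSymm [CommSemiring R] {Q : Matrix k k R} (hQ : Q.IsSymm)
    (hQQ : IsIdempotentElem Q) (C : Matrix k n R) : (Q * C)ᵀ * Q = Cᵀ * Q := by
  rw [transpose_mul, hQ.eq, Matrix.mul_assoc, hQQ.eq]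

section OrthogonalProjector

variable [DecidableEq n] [CommRing R]

noncomputable def orthogonalProjector (B : Matrix k n R) : Matrix k k R := B * (Bᵀ * B)⁻¹ * Bᵀ

theorem isSymm_orthogonalProjector (B : Matrix k n R) : (orthogonalProjector B).IsSymm := by
  simp only [orthogonalProjector, IsSymm, transpose_mul, transpose_transpose,
    transpose_nonsing_inv, Matrix.mul_assoc]

theorem isIdempotentElem_orthogonalProjector {B : Matrix k n R} (hB : IsUnit (Bᵀ * B).det) :
    IsIdempotentElem (orthogonalProjector B) := by
  calc orthogonalProjector B * orthogonalProjector B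
      = B * ((Bᵀ * B)⁻¹ * (Bᵀ * B)) * (Bᵀ * B)⁻¹ * Bᵀ := by
        simp only [orthogonalProjector, Matrix.mul_assoc]
    _ = orthogonalProjector B := by rw [nonsing_inv_mul _ hB, Matrix.mul_one]; rfl

end OrthogonalProjector

end Matrix

theorem stmt_3_general (m N M : ℕ)
    (B₁ : Matrix (Fin m) (Fin N) ℝ) (B₂ : Matrix (Fin m) (Fin M) ℝ)
    (hinj : Function.Injective B₂.mulVec)
    (H : Matrix (Fin N) (Fin N) ℝ) (α : ℝ) (w : Fin m → ℝ)
    (P Q : Matrix (Fin m) (Fin m) ℝ) (A : Matrix (Fin m) (Fin N) ℝ) (b : Fin m → ℝ)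
    (hP : P = B₂ * (B₂.transpose * B₂)⁻¹ * B₂.transpose)
    (hQ : Q = 1 - P) (hA : A = Q * B₁) (hb : b = Q.mulVec w)
    (σ : Fin N → ℝ) (z : Fin M → ℝ) :
    ((B₁.transpose * B₁ + α • H).mulVec σ + (B₁.transpose * B₂).mulVec z =
        B₁.transpose.mulVec w ∧
      (B₂.transpose * B₁).mulVec σ + (B₂.transpose * B₂).mulVec z =
        B₂.transpose.mulVec w) ↔
    ((A.transpose * A + α • H).mulVec σ = A.transpose.mulVec b ∧
      z = ((B₂.transpose * B₂)⁻¹ * B₂.transpose).mulVec (w - B₁.mulVec σ)) := by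
  have hG := isUnit_det_transpose_mul_self hinj
  have hPsymm : P.IsSymm := by rw [hP]; exact isSymm_orthogonalProjector B₂
  have hPidem : IsIdempotentElem P := by rw [hP]; exact isIdempotentElem_orthogonalProjector hG
  have hQsymm : Q.IsSymm := hQ ▸ isSymm_one.sub hPsymm
  have hQidem : IsIdempotentElem Q := hQ ▸ hPidem.one_sub
  have hAQ : Aᵀ * Q = B₁ᵀ * Q := hA ▸ transpose_mul_mul_self_of_isSymm hQsymm hQidem B₁
  have hAA : Aᵀ * A = B₁ᵀ * B₁ - B₁ᵀ * B₂ * (B₂ᵀ * B₂)⁻¹ * (B₂ᵀ * B₁) := by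
    rw [hA, ← Matrix.mul_assoc, ← hA, hAQ, hQ, hP]
    simp only [Matrix.mul_sub, Matrix.sub_mul, Matrix.mul_one, Matrix.mul_assoc]
  have hAb : Aᵀ *ᵥ b = B₁ᵀ *ᵥ w - (B₁ᵀ * B₂ * (B₂ᵀ * B₂)⁻¹) *ᵥ (B₂ᵀ *ᵥ w) := by
    rw [hb, mulVec_mulVec, hAQ, hQ, hP]
    simp only [Matrix.mul_sub, Matrix.sub_mulVec, Matrix.mul_one, mulVec_mulVec, Matrix.mul_assoc]
  have hz : (B₂ᵀ * B₂)⁻¹ *ᵥ (B₂ᵀ *ᵥ w - (B₂ᵀ * B₁) *ᵥ σ) =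
      ((B₂ᵀ * B₂)⁻¹ * B₂ᵀ) *ᵥ (w - B₁ *ᵥ σ) := by
    simp only [mulVec_sub, mulVec_mulVec, Matrix.mul_assoc]
  rw [mulVec_add_mulVec_and_iff_schurComplement hG, hAA, hAb, hz, sub_add_eq_add_sub]

/-- Decoupling of the block linear system.  With `B₁ : m×N`,
`B₂ : m×M` of full column rank, `H : N×N`, `α ∈ ℝ`, `w ∈ ℝᵐ`,
`P = B₂(B₂ᵀB₂)⁻¹B₂ᵀ`, `Q = I − P`, `A = Q·B₁`, `b = Q·w`, the pair `(σ, z)`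
satisfies
  `(B₁ᵀB₁ + αH)σ + B₁ᵀB₂ z = B₁ᵀw` and `B₂ᵀB₁ σ + B₂ᵀB₂ z = B₂ᵀw`
if and only if
  `(AᵀA + αH)σ = Aᵀb` and `z = (B₂ᵀB₂)⁻¹B₂ᵀ(w − B₁σ)`. -/
theorem stmt_3 (m N M : ℕ) (hm : 0 < m) (hN : 0 < N) (hM : 0 < M)
    (B₁ : Matrix (Fin m) (Fin N) ℝ) (B₂ : Matrix (Fin m) (Fin M) ℝ)
    (hinj : Function.Injective B₂.mulVec)
    (H : Matrix (Fin N) (Fin N) ℝ) (α : ℝ) (w : Fin m → ℝ)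
    (P Q : Matrix (Fin m) (Fin m) ℝ) (A : Matrix (Fin m) (Fin N) ℝ) (b : Fin m → ℝ)
    (hP : P = B₂ * (B₂.transpose * B₂)⁻¹ * B₂.transpose)
    (hQ : Q = 1 - P) (hA : A = Q * B₁) (hb : b = Q.mulVec w)
    (σ : Fin N → ℝ) (z : Fin M → ℝ) :
    ((B₁.transpose * B₁ + α • H).mulVec σ + (B₁.transpose * B₂).mulVec z =
        B₁.transpose.mulVec w ∧
      (B₂.transpose * B₁).mulVec σ + (B₂.transpose * B₂).mulVec z =
        B₂.transpose.mulVec w) ↔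
    ((A.transpose * A + α • H).mulVec σ = A.transpose.mulVec b ∧
      z = ((B₂.transpose * B₂)⁻¹ * B₂.transpose).mulVec (w - B₁.mulVec σ)) :=
  stmt_3_general m N M B₁ B₂ hinj H α w P Q A b hP hQ hA hb σ z
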